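/- Let H ∈ (0,1) and let (B_t)_{t∈ℝ} be a family of square-integrable real-valued random variables on a probability space (Ω, F, P) with fBm covariance structure with Hurst index H, i.e. E[B_s B_t] = K_H(s,t) = (|s|^{2H} + |t|^{2H} − |s−t|^{2H})/2 for all s, t ∈ ℝ. Then for every Δ > 0 and all integers i, j, writing h = i − j, E[(B_{iΔ} − 2B_{(i−1)Δ} + B_{(i−2)Δ})(B_{jΔ} − 2B_{(j−2)Δ} + B_{(j−4)Δ})] = (Δ^{2H}/2)·(−|h−2|^{2H} + 2|h−1|^{2H} + |h|^{2H} − 4|h+1|^{2H} + |h+2|^{2H} + 2|h+3|^{2H} − |h+4|^{2H}). -/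

import Mathlib

/-! Expanding both increments by bilinearity writes the cross-covariance as a double sum of
kernel values `K_H(x, y) = (|x|^{2H} + |y|^{2H} - |x - y|^{2H}) / 2` weighted by `(1, -2, 1)`.
Both weight vectors sum to zero, so the terms `|x|^{2H}` and `|y|^{2H}` cancel and only the
stationary part `-|x - y|^{2H} / 2` survives; it depends on the lattice points only through
`(x - y) Δ`, which pulls out the factor `Δ^{2H}`. -/

open MeasureTheory Finset

noncomputable def fbmCov (H s t : ℝ) : ℝ := (|s| ^ (2 * H) + |t| ^ (2 * H) - |s - t| ^ (2 * H)) / 2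

theorem integral_sum_mul_sum_of_memLp {Ω ι κ : Type*} [MeasurableSpace Ω] {P : Measure Ω}
    [IsFiniteMeasure P] (s : Finset ι) (t : Finset κ) (a : ι → ℝ) (b : κ → ℝ)
    (X : ι → Ω → ℝ) (Y : κ → Ω → ℝ) (hX : ∀ k, MemLp (X k) 2 P) (hY : ∀ l, MemLp (Y l) 2 P) :
    ∫ ω, (∑ k ∈ s, a k * X k ω) * (∑ l ∈ t, b l * Y l ω) ∂P
      = ∑ k ∈ s, ∑ l ∈ t, a k * b l * ∫ ω, X k ω * Y l ω ∂P := by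
  have hint : ∀ k l, Integrable (fun ω => a k * b l * (X k ω * Y l ω)) P := fun k l =>
    (memLp_one_iff_integrable.mp ((hY l).smul (hX k))).const_mul _
  simp_rw [sum_mul_sum, mul_mul_mul_comm (a _)]
  rw [integral_finsetSum _ fun k _ => integrable_finsetSum _ fun l _ => hint k l]
  refine sum_congr rfl fun k _ => ?_
  rw [integral_finsetSum _ fun l _ => hint k l]
  exact sum_congr rfl fun l _ => integral_const_mul _ _

theorem sum_sum_mul_fbmCov_of_sum_eq_zero {ι κ : Type*} (s : Finset ι) (t : Finset κ)
    (a : ι → ℝ) (b : κ → ℝ) (ha : ∑ k ∈ s, a k = 0) (hb : ∑ l ∈ t, b l = 0)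
    (H : ℝ) (x : ι → ℝ) (y : κ → ℝ) :
    ∑ k ∈ s, ∑ l ∈ t, a k * b l * fbmCov H (x k) (y l)
      = -(∑ k ∈ s, ∑ l ∈ t, a k * b l * |x k - y l| ^ (2 * H)) / 2 := by
  have hsplit : ∀ k l, a k * b l * fbmCov H (x k) (y l)
      = a k * |x k| ^ (2 * H) * b l / 2 + a k * (b l * |y l| ^ (2 * H)) / 2
        - a k * b l * |x k - y l| ^ (2 * H) / 2 := fun k l => by
    rw [fbmCov]; ring
  simp_rw [hsplit, sum_sub_distrib, sum_add_distrib, ← sum_div, ← mul_sum, ← sum_mul, ha, hb]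
  simp [neg_div]

theorem abs_mul_sub_mul_rpow {Δ : ℝ} (hΔ : 0 ≤ Δ) (x y p : ℝ) :
    |x * Δ - y * Δ| ^ p = Δ ^ p * |x - y| ^ p := by
  rw [← sub_mul, abs_mul, abs_of_nonneg hΔ, Real.mul_rpow (abs_nonneg _) hΔ, mul_comm]

theorem fbm_lag1_lag2_secondOrder_increment_crossCov_general
    {Ω : Type*} [MeasurableSpace Ω] (P : Measure Ω) [IsProbabilityMeasure P]
    (H : ℝ)
    (B : ℝ → Ω → ℝ)
    (hL2 : ∀ t : ℝ, MemLp (B t) 2 P)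
    (hcov : ∀ s t : ℝ, ∫ ω, B s ω * B t ω ∂P
      = (|s| ^ (2 * H) + |t| ^ (2 * H) - |s - t| ^ (2 * H)) / 2)
    (Δ : ℝ) (hΔ : 0 < Δ) (i j : ℤ) :
    ∫ ω, (B ((i : ℝ) * Δ) ω - 2 * B (((i : ℝ) - 1) * Δ) ω + B (((i : ℝ) - 2) * Δ) ω)
        * (B ((j : ℝ) * Δ) ω - 2 * B (((j : ℝ) - 2) * Δ) ω + B (((j : ℝ) - 4) * Δ) ω) ∂P
      = Δ ^ (2 * H) / 2 *
        (-(|((i : ℝ) - (j : ℝ)) - 2| ^ (2 * H))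
          + 2 * |((i : ℝ) - (j : ℝ)) - 1| ^ (2 * H)
          + |(i : ℝ) - (j : ℝ)| ^ (2 * H)
          - 4 * |((i : ℝ) - (j : ℝ)) + 1| ^ (2 * H)
          + |((i : ℝ) - (j : ℝ)) + 2| ^ (2 * H)
          + 2 * |((i : ℝ) - (j : ℝ)) + 3| ^ (2 * H)
          - |((i : ℝ) - (j : ℝ)) + 4| ^ (2 * H)) := by
  set w : Fin 3 → ℝ := ![1, -2, 1]
  have hw : ∑ k, w k = 0 := by
    simp only [w, Fin.sum_univ_three, Fin.isValue, Matrix.cons_val]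
    norm_num
  have hincrement : ∀ (x : Fin 3 → ℝ) ω,
      B (x 0 * Δ) ω - 2 * B (x 1 * Δ) ω + B (x 2 * Δ) ω = ∑ k, w k * B (x k * Δ) ω := by
    intro x ω
    simp only [w, Fin.sum_univ_three, Fin.isValue, Matrix.cons_val]
    ring
  calc _ = ∫ ω, (∑ k, w k * B (![(i : ℝ), i - 1, i - 2] k * Δ) ω)
          * (∑ l, w l * B (![(j : ℝ), j - 2, j - 4] l * Δ) ω) ∂P := by
        simp only [← hincrement, Fin.isValue, Matrix.cons_val]
    _ = ∑ k, ∑ l, w k * w l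
          * fbmCov H (![(i : ℝ), i - 1, i - 2] k * Δ) (![(j : ℝ), j - 2, j - 4] l * Δ) := by
        rw [integral_sum_mul_sum_of_memLp _ _ _ _ _ _ (fun _ => hL2 _) (fun _ => hL2 _)]
        simp only [hcov, fbmCov]
    _ = -(∑ k, ∑ l, w k * w l
          * |![(i : ℝ), i - 1, i - 2] k * Δ - ![(j : ℝ), j - 2, j - 4] l * Δ| ^ (2 * H)) / 2 :=
        sum_sum_mul_fbmCov_of_sum_eq_zero _ _ _ _ hw hw _ _ _
    _ = _ := by
        simp only [abs_mul_sub_mul_rpow hΔ.le, Fin.sum_univ_three, Fin.isValue, Matrix.cons_val,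
          w]
        ring_nf

/-- Cross-covariance of the lag-1 and lag-2 second-order increments of a process
with fBm covariance structure with Hurst index `H`. -/
theorem fbm_lag1_lag2_secondOrder_increment_crossCov
    {Ω : Type*} [MeasurableSpace Ω] (P : Measure Ω) [IsProbabilityMeasure P]
    (H : ℝ) (hH : H ∈ Set.Ioo (0 : ℝ) 1)
    (B : ℝ → Ω → ℝ)
    (hL2 : ∀ t : ℝ, MemLp (B t) 2 P)
    (hcov : ∀ s t : ℝ, ∫ ω, B s ω * B t ω ∂P
      = (|s| ^ (2 * H) + |t| ^ (2 * H) - |s - t| ^ (2 * H)) / 2)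
    (Δ : ℝ) (hΔ : 0 < Δ) (i j : ℤ) :
    ∫ ω, (B ((i : ℝ) * Δ) ω - 2 * B (((i : ℝ) - 1) * Δ) ω + B (((i : ℝ) - 2) * Δ) ω)
        * (B ((j : ℝ) * Δ) ω - 2 * B (((j : ℝ) - 2) * Δ) ω + B (((j : ℝ) - 4) * Δ) ω) ∂P
      = Δ ^ (2 * H) / 2 *
        (-(|((i : ℝ) - (j : ℝ)) - 2| ^ (2 * H))
          + 2 * |((i : ℝ) - (j : ℝ)) - 1| ^ (2 * H)
          + |(i : ℝ) - (j : ℝ)| ^ (2 * H)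
          - 4 * |((i : ℝ) - (j : ℝ)) + 1| ^ (2 * H)
          + |((i : ℝ) - (j : ℝ)) + 2| ^ (2 * H)
          + 2 * |((i : ℝ) - (j : ℝ)) + 3| ^ (2 * H)
          - |((i : ℝ) - (j : ℝ)) + 4| ^ (2 * H)) :=
  fbm_lag1_lag2_secondOrder_increment_crossCov_general P H B hL2 hcov Δ hΔ i j
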